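/- Let A be a commutative algebra, I an abstract continuity ideal in A, and let 𝔓 denote the set of prime ideals of the form (I : a) for a ∈ A. Then for every P ∈ 𝔓 there exists a ∈ A with a ∉ P but a ∈ Q for every Q ∈ 𝔓 with Q ⊄ P. -/

import Mathlib

/-- The quotient ideal `(J : a) = {x | a * x ∈ J}`. -/
def quotIdeal {A : Type*} [CommRing A] (J : Ideal A) (a : A) : Ideal A where
  carrier := {x | a * x ∈ J}
  zero_mem' := by simp
  add_mem' := by
    intro x y hx hy
    simpa [mul_add] using J.add_mem hx hy
  smul_mem' := by
    intro c x hx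
    simp only [smul_eq_mul, Set.mem_setOf_eq, mul_left_comm a c x] at *
    exact J.mul_mem_left c hx

/-- An ideal `I` is an abstract continuity ideal if for every sequence
`(a n)` the increasing chain of quotient ideals eventually stabilizes. -/
def AbstractContinuityIdeal {A : Type*} [CommRing A] (I : Ideal A) : Prop :=
  ∀ a : ℕ → A, ∃ n₀ : ℕ, ∀ n ≥ n₀,
    quotIdeal I (∏ i ∈ Finset.range n, a i) =
      quotIdeal I (∏ i ∈ Finset.range (n + 1), a i)

/-!
Applied to the multiplicative set `A \ P`, the chain condition yields some `x ∉ P` such that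
`(I : x q) = (I : x)` for every `q ∉ P`. This `x` is the witness: if `Q = (I : d) ⊄ P`, pick
`q ∈ Q \ P`; then `d ∈ (I : x q) = (I : x)`, i.e. `x ∈ Q`.
-/

section

variable {A : Type*} [CommRing A] {I : Ideal A}

lemma mem_quotIdeal {a x : A} : x ∈ quotIdeal I a ↔ a * x ∈ I := Iff.rfl

lemma mem_quotIdeal_of_quotIdeal_mul_eq {x q d : A} (h : quotIdeal I (x * q) = quotIdeal I x)
    (hq : q ∈ quotIdeal I d) : x ∈ quotIdeal I d := by
  have hd : d ∈ quotIdeal I (x * q) := by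
    rw [mem_quotIdeal, mul_assoc, mul_comm q d]
    exact I.mul_mem_left x hq
  rw [h, mem_quotIdeal, mul_comm] at hd
  exact hd

lemma AbstractContinuityIdeal.exists_quotIdeal_mul_eq (hI : AbstractContinuityIdeal I)
    (S : Submonoid A) : ∃ x ∈ S, ∀ y ∈ S, quotIdeal I (x * y) = quotIdeal I x := by
  by_contra! h
  choose! f hfS hf using h
  let p : ℕ → A := fun n => Nat.rec 1 (fun _ x => x * f x) n
  have hpS : ∀ n, p n ∈ S := fun n => by
    induction n with
    | zero => exact S.one_mem
    | succ n ih => exact S.mul_mem ih (hfS _ ih)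
  have hprod : ∀ n, ∏ i ∈ Finset.range n, f (p i) = p n := fun n => by
    induction n with
    | zero => rfl
    | succ n ih => rw [Finset.prod_range_succ, ih]
  obtain ⟨n₀, hn₀⟩ := hI (fun i => f (p i))
  have hstable := hn₀ n₀ le_rfl
  rw [hprod, hprod] at hstable
  exact hf _ (hpS n₀) hstable.symm

end

/-- Let `I` be an abstract continuity ideal and `𝔓` the set of prime ideals
of the form `(I : a)`. For every `P ∈ 𝔓` there exists `a ∉ P` with
`a ∈ Q` for every `Q ∈ 𝔓` not contained in `P`. -/
theorem witness_for_prime_quotIdeal {A : Type*} [CommRing A]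
    (I : Ideal A) (hI : AbstractContinuityIdeal I)
    (𝔓 : Set (Ideal A)) (h𝔓 : 𝔓 = {P | (∃ a : A, P = quotIdeal I a) ∧ P.IsPrime})
    (P : Ideal A) (hP : P ∈ 𝔓) :
    ∃ a : A, a ∉ P ∧ ∀ Q ∈ 𝔓, ¬ Q ≤ P → a ∈ Q := by
  subst h𝔓
  have : P.IsPrime := hP.2
  obtain ⟨x, hxP, hx⟩ := hI.exists_quotIdeal_mul_eq P.primeCompl
  refine ⟨x, hxP, ?_⟩
  rintro Q ⟨⟨d, rfl⟩, -⟩ hQP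
  obtain ⟨q, hqQ, hqP⟩ := SetLike.not_le_iff_exists.mp hQP
  exact mem_quotIdeal_of_quotIdeal_mul_eq (hx q hqP) hqQ
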